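/- Let R be a Prüfer domain whose prime spectrum Spec(R) is a Noetherian topological space. Then every stable semistar operation ⋆ on R equals its normalized stable version ⋆̃. -/

import Mathlib

open Pointwise

set_option linter.unusedSectionVars false
set_option linter.unusedVariables false

section Defs

variable {R : Type*} (K : Type*) [CommRing R] [IsDomain R] [Field K] [Algebra R K]
  [IsFractionRing R K]

/-- A function `f` on the `R`-submodules of the quotient field `K` is a semistar operation if it
is extensive, idempotent, monotone and commutes with scaling by elements of `K`. -/
def IsSemistarOperation (f : Submodule R K → Submodule R K) : Prop :=
  (∀ I : Submodule R K, I ≤ f I) ∧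
  (∀ I : Submodule R K, f (f I) = f I) ∧
  (∀ I J : Submodule R K, I ≤ J → f I ≤ f J) ∧
  (∀ (x : K) (I : Submodule R K), f (x • I) = x • f I)

/-- A semistar operation is stable if it distributes over finite intersections. -/
def IsStableOperation (f : Submodule R K → Submodule R K) : Prop :=
  ∀ I J : Submodule R K, f (I ⊓ J) = f I ⊓ f J

/-- An ideal of `R`, viewed as an `R`-submodule of the quotient field `K`. -/
def idealToK (I : Ideal R) : Submodule R K :=
  Submodule.map (Algebra.linearMap R K) I

/-- A Prüfer domain is an integral domain in which every nonzero finitely generated ideal is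
invertible (as a fractional ideal, i.e. as a submodule of the quotient field). -/
def IsPruferDomain : Prop :=
  ∀ I : Ideal R, I ≠ ⊥ → I.FG → ∃ J : Submodule R K, idealToK K I * J = 1

/-- The localization `R_P` of `R` at the prime `P`, viewed as an `R`-submodule of the quotient
field `K`. -/
noncomputable def locSub (P : Ideal R) (hP : P.IsPrime) : Submodule R K :=
  haveI := hP
  Subalgebra.toSubmodule
    (Localization.subalgebra K P.primeCompl
      (fun x hx => mem_nonZeroDivisors_of_ne_zero (fun h0 => hx (h0 ▸ P.zero_mem))))

/-- The `v`-operation of the valuation ring `R_P`, applied to the `R_P`-submodule of `K`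
generated by (the image of) `I`: it sends `I` to `(R_P : (R_P : IR_P))`. -/
noncomputable def vOp (P : Ideal R) (hP : P.IsPrime) (I : Submodule R K) : Submodule R K :=
  locSub K P hP / (locSub K P hP / (I * locSub K P hP))

/-- The quasi-spectrum of a (stable) semistar operation: the set of primes `P` such that
`P^⋆ ∩ R = P`. -/
def QSpec (f : Submodule R K → Submodule R K) : Set (Ideal R) :=
  {P | P.IsPrime ∧ f (idealToK K P) ⊓ 1 = idealToK K P}

/-- The pseudo-spectrum of a stable semistar operation: the set of primes `P` such that
`P^⋆ ∩ R = R` and `L^⋆ ∩ R = L` for some `P`-primary ideal `L`. -/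
def PsSpec (f : Submodule R K → Submodule R K) : Set (Ideal R) :=
  {P | P.IsPrime ∧ f (idealToK K P) ⊓ 1 = 1 ∧
    ∃ L : Ideal R, L.IsPrimary ∧ L.radical = P ∧ f (idealToK K L) ⊓ 1 = idealToK K L}

/-- The normalized stable version of a stable semistar operation `f`:
`I ↦ ⋂ {IR_P : P ∈ QSpec} ∩ ⋂ {(IR_P)^{v_{R_P}} : P ∈ PsSpec}`. -/
noncomputable def normStable (f : Submodule R K → Submodule R K) (I : Submodule R K) :
    Submodule R K :=
  (⨅ P : QSpec K f, I * locSub K P.1 P.2.1) ⊓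
    ⨅ P : PsSpec K f, vOp K P.1 P.2.1 I

end Defs


section Aux

variable {R K : Type*} [CommRing R] [IsDomain R] [Field K] [Algebra R K] [IsFractionRing R K]

private lemma phi_inj : Function.Injective (algebraMap R K) :=
  IsFractionRing.injective R K

private lemma mem_smul' {x : K} {M : Submodule R K} {y : K} :
    y ∈ x • M ↔ ∃ m ∈ M, x * m = y := by
  constructor
  · rintro ⟨m, hm, rfl⟩; exact ⟨m, hm, rfl⟩
  · rintro ⟨m, hm, rfl⟩; exact ⟨m, hm, rfl⟩

private lemma mem_idealToK {A : Ideal R} {y : K} :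
    y ∈ idealToK K A ↔ ∃ a ∈ A, algebraMap R K a = y := by
  constructor
  · rintro ⟨a, ha, h⟩; exact ⟨a, ha, by rw [← h, Algebra.linearMap_apply]⟩
  · rintro ⟨a, ha, h⟩; exact ⟨a, ha, by rw [Algebra.linearMap_apply, h]⟩

private lemma mem_one' {y : K} : y ∈ (1 : Submodule R K) ↔ ∃ r : R, algebraMap R K r = y :=
  Submodule.mem_one

private lemma idealToK_le_one {A : Ideal R} : idealToK K A ≤ (1 : Submodule R K) := by
  rintro y hy
  obtain ⟨a, -, rfl⟩ := mem_idealToK.1 hy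
  exact mem_one'.2 ⟨a, rfl⟩

/-- contraction of a submodule of K to an ideal of R -/
private def ctr (M : Submodule R K) : Ideal R :=
  Submodule.comap (Algebra.linearMap R K) M

private lemma mem_ctr {M : Submodule R K} {r : R} : r ∈ ctr M ↔ algebraMap R K r ∈ M := by
  rw [ctr, Submodule.mem_comap, Algebra.linearMap_apply]

private lemma idealToK_ctr (M : Submodule R K) : idealToK K (ctr M) = M ⊓ 1 := by
  ext z
  constructor
  · intro hz
    obtain ⟨a, ha, rfl⟩ := mem_idealToK.1 hz
    exact ⟨ha, mem_one'.2 ⟨a, rfl⟩⟩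
  · rintro ⟨hz, h1⟩
    obtain ⟨r, rfl⟩ := mem_one'.1 h1
    exact mem_idealToK.2 ⟨r, mem_ctr.2 hz, rfl⟩

private lemma smul_submodule_mul (z : K) (M N : Submodule R K) :
    (z • M) * N = z • (M * N) := by
  apply le_antisymm
  · rw [Submodule.mul_le]
    rintro m hm n hn
    obtain ⟨m', hm', rfl⟩ := mem_smul'.1 hm
    exact mem_smul'.2 ⟨m' * n, Submodule.mul_mem_mul hm' hn, (mul_assoc _ _ _).symm⟩
  · rintro w hw
    obtain ⟨w', hw', rfl⟩ := mem_smul'.1 hw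
    refine Submodule.mul_induction_on hw' (fun m hm n hn => ?_) (fun a b ha hb => ?_)
    · rw [← mul_assoc]
      exact Submodule.mul_mem_mul (mem_smul'.2 ⟨m, hm, rfl⟩) hn
    · rw [mul_add]; exact add_mem ha hb

private lemma smul_mono_right' (z : K) {M N : Submodule R K} (h : M ≤ N) :
    z • M ≤ z • N := by
  rintro w hw
  obtain ⟨m, hm, rfl⟩ := mem_smul'.1 hw
  exact mem_smul'.2 ⟨m, h hm, rfl⟩

private lemma smul_submodule_smul (z w : K) (M : Submodule R K) :
    z • w • M = (z * w) • M := smul_smul z w M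

private lemma one_smul_submodule (M : Submodule R K) : (1 : K) • M = M := one_smul _ M

private lemma idealToK_mul (A B : Ideal R) :
    idealToK K (A * B) = idealToK K A * idealToK K B := by
  apply le_antisymm
  · rintro z hz
    obtain ⟨c, hc, rfl⟩ := mem_idealToK.1 hz
    refine Submodule.mul_induction_on hc (fun a ha b hb => ?_) (fun u v hu hv => ?_)
    · rw [map_mul]
      exact Submodule.mul_mem_mul (mem_idealToK.2 ⟨a, ha, rfl⟩) (mem_idealToK.2 ⟨b, hb, rfl⟩)
    · rw [map_add]; exact add_mem hu hv
  · rw [Submodule.mul_le]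
    rintro y hy z hz
    obtain ⟨a, ha, rfl⟩ := mem_idealToK.1 hy
    obtain ⟨b, hb, rfl⟩ := mem_idealToK.1 hz
    rw [← map_mul]
    exact mem_idealToK.2 ⟨a * b, Ideal.mul_mem_mul ha hb, rfl⟩

private lemma idealToK_top : idealToK K (⊤ : Ideal R) = 1 := by
  ext z
  rw [mem_idealToK, mem_one']
  simp

private lemma idealToK_pow (A : Ideal R) (n : ℕ) :
    idealToK K (A ^ n) = (idealToK K A) ^ n := by
  induction n with
  | zero => simpa [pow_zero, Ideal.one_eq_top] using idealToK_top
  | succ k ih => rw [pow_succ, pow_succ, idealToK_mul, ih]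



section Loc

variable {f : Submodule R K → Submodule R K} {P : Ideal R} {hP : P.IsPrime}

private lemma mem_locSub {y : K} :
    y ∈ locSub K P hP ↔ ∃ a s, s ∉ P ∧ algebraMap R K s * y = algebraMap R K a := by
  rw [locSub, Subalgebra.mem_toSubmodule]
  constructor
  · rintro ⟨a, s, hs, rfl⟩
    refine ⟨a, s, hs, ?_⟩
    rw [mul_comm]
    exact IsLocalization.mk'_spec K a ⟨s, _⟩
  · rintro ⟨a, s, hs, h⟩
    exact ⟨a, s, hs, IsLocalization.eq_mk'_iff_mul_eq.2 (by rw [mul_comm] at h; exact h)⟩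

private lemma algebraMap_mem_locSub (r : R) : algebraMap R K r ∈ locSub K P hP :=
  mem_locSub.2 ⟨r, 1, hP.ne_top ∘ (Ideal.eq_top_of_isUnit_mem P · isUnit_one), by rw [map_one, one_mul]⟩

private lemma one_mem_locSub : (1 : K) ∈ locSub K P hP := by
  simpa using algebraMap_mem_locSub (K := K) (P := P) (hP := hP) 1

private lemma one_le_locSub : (1 : Submodule R K) ≤ locSub K P hP := by
  rintro y hy
  obtain ⟨r, rfl⟩ := mem_one'.1 hy
  exact algebraMap_mem_locSub r

private lemma algebraMap_ne_zero {s : R} (hs : s ∉ P) : algebraMap R K s ≠ 0 := by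
  intro h
  exact hs (by simpa using (phi_inj (R := R) (K := K) (h.trans (map_zero _).symm)) ▸ P.zero_mem)

private lemma inv_mem_locSub {s : R} (hs : s ∉ P) : (algebraMap R K s)⁻¹ ∈ locSub K P hP :=
  mem_locSub.2 ⟨1, s, hs, by rw [map_one, mul_inv_cancel₀ (algebraMap_ne_zero hs)]⟩

private lemma locSub_mul_le : locSub K P hP * locSub K P hP ≤ locSub K P hP := by
  rw [Submodule.mul_le]
  intro m hm n hn
  rw [locSub, Subalgebra.mem_toSubmodule] at *
  exact mul_mem hm hn

private lemma mem_mul_locSub {M : Submodule R K} {y : K} :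
    y ∈ M * locSub K P hP ↔ ∃ s, s ∉ P ∧ algebraMap R K s * y ∈ M := by
  constructor
  · intro hy
    refine Submodule.mul_induction_on hy (fun m hm v hv => ?_) (fun a b ha hb => ?_)
    · obtain ⟨c, s, hs, hcs⟩ := mem_locSub.1 hv
      refine ⟨s, hs, ?_⟩
      have : algebraMap R K s * (m * v) = c • m := by
        rw [Algebra.smul_def, ← hcs]; ring
      rw [this]
      exact M.smul_mem c hm
    · obtain ⟨s, hs, hsm⟩ := ha
      obtain ⟨t, ht, htm⟩ := hb
      refine ⟨s * t, fun h => (hP.mem_or_mem h).elim hs ht, ?_⟩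
      have : algebraMap R K (s * t) * (a + b) = t • (algebraMap R K s * a) + s • (algebraMap R K t * b) := by
        rw [Algebra.smul_def, Algebra.smul_def, map_mul]; ring
      rw [this]
      exact add_mem (M.smul_mem t hsm) (M.smul_mem s htm)
  · rintro ⟨s, hs, h⟩
    have : y = (algebraMap R K s * y) * (algebraMap R K s)⁻¹ := by
      field_simp [algebraMap_ne_zero hs]
    rw [this]
    exact Submodule.mul_mem_mul h (inv_mem_locSub hs)

private lemma mulV_stable (M : Submodule R K) :
    (M * locSub K P hP) * locSub K P hP ≤ M * locSub K P hP := by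
  rw [mul_assoc]
  exact mul_le_mul_right locSub_mul_le _

private lemma le_mulV (M : Submodule R K) : M ≤ M * locSub K P hP := by
  intro m hm
  simpa using Submodule.mul_mem_mul hm (one_mem_locSub (P := P) (hP := hP))

end Loc

section Star

variable {f : Submodule R K → Submodule R K}

private lemma one_mem_one : (1 : K) ∈ (1 : Submodule R K) := mem_one'.2 ⟨1, map_one _⟩

private lemma zero_smul_sub (N : Submodule R K) : (0 : K) • N = ⊥ := by
  ext z
  simp only [Submodule.mem_bot]
  constructor
  · intro hz
    obtain ⟨m, hm, rfl⟩ := mem_smul'.1 hz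
    rw [zero_mul]
  · rintro rfl
    exact mem_smul'.2 ⟨0, N.zero_mem, by rw [zero_mul]⟩

private lemma f_bot (hf : IsSemistarOperation K f) : f (⊥ : Submodule R K) = ⊥ := by
  have h := hf.2.2.2 0 ⊥
  rw [zero_smul_sub, zero_smul_sub] at h
  exact h

private lemma f_mul_mem (hf : IsSemistarOperation K f) {y z : K} {M' M : Submodule R K}
    (h : y ∈ f M') (hle : ∀ m ∈ M', z * m ∈ M) : z * y ∈ f M := by
  have h1 : z • M' ≤ M := by
    rintro w hw
    obtain ⟨m, hm, rfl⟩ := mem_smul'.1 hw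
    exact hle m hm
  have h2 : z • f M' ≤ f M := by
    rw [← hf.2.2.2]
    exact hf.2.2.1 _ _ h1
  exact h2 (mem_smul'.2 ⟨y, h, rfl⟩)

private lemma mem_ctr_inv_smul {x : K} (hx : x ≠ 0) {M : Submodule R K} {r : R} :
    r ∈ ctr (x⁻¹ • M) ↔ algebraMap R K r * x ∈ M := by
  rw [mem_ctr]
  constructor
  · intro h
    obtain ⟨m, hm, hme⟩ := mem_smul'.1 h
    have : algebraMap R K r * x = m := by
      rw [← hme, mul_comm, ← mul_assoc, mul_inv_cancel₀ hx, one_mul]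
    rwa [this]
  · intro h
    exact mem_smul'.2 ⟨algebraMap R K r * x, h, by field_simp⟩

private lemma f_transfer (hf : IsSemistarOperation K f) (hst : IsStableOperation K f)
    {x : K} (hx : x ≠ 0) {M : Submodule R K} (h : x ∈ f M) :
    (1 : K) ∈ f (idealToK K (ctr (x⁻¹ • M))) := by
  rw [idealToK_ctr, hst]
  refine ⟨?_, hf.1 1 one_mem_one⟩
  rw [hf.2.2.2]
  exact mem_smul'.2 ⟨x, h, inv_mul_cancel₀ hx⟩

private lemma f_one_mem_mul (hf : IsSemistarOperation K f) {M N : Submodule R K}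
    (hM : (1 : K) ∈ f M) (hN : (1 : K) ∈ f N) : (1 : K) ∈ f (M * N) := by
  have h1 : M ≤ f (M * N) := by
    intro y hy
    have := f_mul_mem hf hN (fun n hn => Submodule.mul_mem_mul hy hn) (z := y)
    rwa [mul_one] at this
  have h2 : f M ≤ f (M * N) := by
    have := hf.2.2.1 _ _ h1
    rwa [hf.2.1] at this
  exact h2 hM

private lemma f_one_mem_pow (hf : IsSemistarOperation K f) {M : Submodule R K}
    (h : (1 : K) ∈ f M) (n : ℕ) : (1 : K) ∈ f (M ^ n) := by
  induction n with
  | zero => rw [pow_zero]; exact hf.1 1 one_mem_one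
  | succ k ih => rw [pow_succ]; exact f_one_mem_mul hf ih h

private lemma f_locStable (hf : IsSemistarOperation K f) {P : Ideal R} {hP : P.IsPrime}
    {M : Submodule R K} (hM : M * locSub K P hP ≤ M) :
    f M * locSub K P hP ≤ f M := by
  rw [Submodule.mul_le]
  intro y hy v hv
  obtain ⟨c, s, hs, hcs⟩ := mem_locSub.1 hv
  have hsne : algebraMap R K s ≠ 0 := algebraMap_ne_zero hs
  have h1 : (algebraMap R K s)⁻¹ • M ≤ M := by
    rintro w hw
    obtain ⟨m, hm, rfl⟩ := mem_smul'.1 hw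
    have : (algebraMap R K s)⁻¹ * m = m * (algebraMap R K s)⁻¹ := mul_comm _ _
    rw [this]
    exact hM (Submodule.mul_mem_mul hm (inv_mem_locSub hs))
  have h2 : (algebraMap R K s)⁻¹ • f M ≤ f M := by
    rw [← hf.2.2.2]
    exact hf.2.2.1 _ _ h1
  have hyv : y * v = (algebraMap R K s)⁻¹ * (c • y) := by
    rw [Algebra.smul_def]
    have hv' : v = algebraMap R K c * (algebraMap R K s)⁻¹ := by
      field_simp [← hcs]
      rw [mul_comm]; exact hcs
    rw [hv']
    field_simp
  rw [hyv]
  exact h2 (mem_smul'.2 ⟨c • y, (f M).smul_mem c hy, rfl⟩)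

end Star

section Prufer

private lemma prufer_dichotomy (hR : IsPruferDomain (R := R) K) (P : Ideal R) (hP : P.IsPrime)
    (z : K) : z ∈ locSub K P hP ∨ z⁻¹ ∈ locSub K P hP := by
  by_cases hz : z = 0
  · left; rw [hz]; exact (locSub K P hP).zero_mem
  obtain ⟨a, b, hb, hab⟩ := IsFractionRing.div_surjective (A := R) z
  have hbne : b ≠ 0 := nonZeroDivisors.ne_zero hb
  have hbK : algebraMap R K b ≠ 0 := fun h => hbne (phi_inj (by rw [h, map_zero]))
  have hane : a ≠ 0 := by
    intro h; apply hz; rw [← hab, h, map_zero, zero_div]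
  have haK : algebraMap R K a ≠ 0 := fun h => hane (phi_inj (by rw [h, map_zero]))
  set B : Ideal R := Ideal.span {a, b} with hB
  have haB : algebraMap R K a ∈ idealToK K B :=
    mem_idealToK.2 ⟨a, Ideal.subset_span (by simp), rfl⟩
  have hbB : algebraMap R K b ∈ idealToK K B :=
    mem_idealToK.2 ⟨b, Ideal.subset_span (by simp), rfl⟩
  have hBne : B ≠ ⊥ := by
    intro h
    have ha' : a ∈ B := Ideal.subset_span (by simp)
    rw [h] at ha'
    exact hane (by simpa using ha')
  obtain ⟨J, hJ⟩ := hR B hBne (Submodule.fg_span (Set.toFinite _))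
  have hne : ¬ (idealToK K B * J ≤ idealToK K P) := by
    intro h
    rw [hJ] at h
    obtain ⟨p, hp, hp1⟩ := mem_idealToK.1 (h one_mem_one)
    have hp' : p = 1 := phi_inj (K := K) (by rw [hp1, map_one])
    exact hP.ne_top (Ideal.eq_top_of_isUnit_mem P (hp' ▸ hp) isUnit_one)
  rw [Submodule.mul_le] at hne
  push_neg at hne
  obtain ⟨β, hβ, γ, hγ, hβγ⟩ := hne
  obtain ⟨t, ht⟩ := mem_one'.1 (hJ ▸ Submodule.mul_mem_mul hβ hγ)
  have htP : t ∉ P := fun htP => hβγ (mem_idealToK.2 ⟨t, htP, ht⟩)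
  obtain ⟨r₁, hr₁⟩ := mem_one'.1 (hJ ▸ Submodule.mul_mem_mul haB hγ)
  obtain ⟨r₂, hr₂⟩ := mem_one'.1 (hJ ▸ Submodule.mul_mem_mul hbB hγ)
  obtain ⟨e, he, heq⟩ := mem_idealToK.1 hβ
  rw [hB, Ideal.mem_span_pair] at he
  obtain ⟨c, d, hcd⟩ := he
  have key : t = c * r₁ + d * r₂ := by
    apply phi_inj (K := K)
    rw [map_add, map_mul, map_mul, hr₁, hr₂, ht, ← heq, ← hcd, map_add, map_mul, map_mul]
    ring
  have hor : r₁ ∉ P ∨ r₂ ∉ P := by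
    by_contra hcon
    push_neg at hcon
    exact htP (key ▸ P.add_mem (P.mul_mem_left c hcon.1) (P.mul_mem_left d hcon.2))
  rcases hor with h₁ | h₂
  · right
    refine mem_locSub.2 ⟨r₂, r₁, h₁, ?_⟩
    rw [hr₁, hr₂, ← hab]
    field_simp
  · left
    refine mem_locSub.2 ⟨r₁, r₂, h₂, ?_⟩
    rw [hr₁, hr₂, ← hab]
    field_simp

private lemma locStable_total (hR : IsPruferDomain (R := R) K) (P : Ideal R) (hP : P.IsPrime)
    {M N : Submodule R K} (hM : M * locSub K P hP ≤ M) (hN : N * locSub K P hP ≤ N) :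
    M ≤ N ∨ N ≤ M := by
  by_cases h : M ≤ N
  · exact Or.inl h
  right
  obtain ⟨m, hm, hmN⟩ := SetLike.not_le_iff_exists.1 h
  have hm0 : m ≠ 0 := fun h0 => hmN (h0 ▸ N.zero_mem)
  intro n hn
  by_cases hn0 : n = 0
  · rw [hn0]; exact M.zero_mem
  rcases prufer_dichotomy hR P hP (n * m⁻¹) with hv | hv
  · have : n = m * (n * m⁻¹) := by field_simp
    rw [this]
    exact hM (Submodule.mul_mem_mul hm hv)
  · exfalso
    apply hmN
    rw [mul_inv, inv_inv] at hv
    have : m = n * (m * n⁻¹) := by field_simp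
    rw [this]
    exact hN (Submodule.mul_mem_mul hn (by rwa [mul_comm] at hv))

private lemma inf_mul_locSub (P : Ideal R) (hP : P.IsPrime) (M N : Submodule R K) :
    (M ⊓ N) * locSub K P hP = (M * locSub K P hP) ⊓ (N * locSub K P hP) := by
  apply le_antisymm
  · exact le_inf (mul_le_mul_left inf_le_left _) (mul_le_mul_left inf_le_right _)
  · rintro z ⟨hzM, hzN⟩
    obtain ⟨s, hs, hsz⟩ := mem_mul_locSub.1 hzM
    obtain ⟨t, ht, htz⟩ := mem_mul_locSub.1 hzN
    refine mem_mul_locSub.2 ⟨s * t, fun h => (hP.mem_or_mem h).elim hs ht, ?_, ?_⟩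
    · have : algebraMap R K (s * t) * z = t • (algebraMap R K s * z) := by
        rw [Algebra.smul_def, map_mul]; ring
      rw [this]; exact M.smul_mem t hsz
    · have : algebraMap R K (s * t) * z = s • (algebraMap R K t * z) := by
        rw [Algebra.smul_def, map_mul]; ring
      rw [this]; exact N.smul_mem s htz

end Prufer

section IdealTheory

/-- For `P` a minimal prime over `B` and `p ∈ P`, some multiple `s * p ^ n` with `s ∉ P`
lies in `B`. -/
private lemma exists_pow_mem_of_minimal {B P : Ideal R} (hmin : P ∈ B.minimalPrimes)
    {p : R} (hp : p ∈ P) : ∃ n s, s ∉ P ∧ s * p ^ n ∈ B := by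
  by_contra hcon
  push_neg at hcon
  have hPp : P.IsPrime := hmin.1.1
  set T : Submonoid R :=
    { carrier := {x | ∃ s, s ∉ P ∧ ∃ n : ℕ, x = s * p ^ n}
      one_mem' := ⟨1, fun h => hPp.ne_top (Ideal.eq_top_of_isUnit_mem P h isUnit_one),
        0, by ring⟩
      mul_mem' := by
        rintro x y ⟨s, hs, n, rfl⟩ ⟨t, ht, m, rfl⟩
        exact ⟨s * t, fun h => (hPp.mem_or_mem h).elim hs ht, n + m, by ring⟩ } with hT
  have hdisj : Disjoint (B : Set R) (T : Set R) := by
    rw [Set.disjoint_left]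
    rintro x hxB ⟨s, hs, n, rfl⟩
    exact hcon n s hs hxB
  obtain ⟨Q, hQp, hBQ, hQdisj⟩ := Ideal.exists_le_prime_disjoint B T hdisj
  have hQP : Q ≤ P := by
    intro q hq
    by_contra hqP
    exact Set.disjoint_left.1 hQdisj hq ⟨q, hqP, 0, by ring⟩
  have hpQ : p ∉ Q := fun hpQ =>
    Set.disjoint_left.1 hQdisj hpQ
      ⟨1, fun h => hPp.ne_top (Ideal.eq_top_of_isUnit_mem P h isUnit_one), 1, by ring⟩
  exact hpQ (hmin.2 ⟨hQp, hBQ⟩ hQP hp)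

/-- Noetherian spectrum: minimal choice of zero locus. -/
private lemma noeth_min (hNoeth : TopologicalSpace.NoetherianSpace (PrimeSpectrum R))
    (S : Set (Ideal R)) (hne : S.Nonempty) :
    ∃ B ∈ S, ∀ B' ∈ S, B ≤ B' → ∀ P : Ideal R, P.IsPrime → B ≤ P → B' ≤ P := by
  set g : Ideal R → TopologicalSpace.Closeds (PrimeSpectrum R) :=
    fun B => ⟨PrimeSpectrum.zeroLocus (B : Set R), PrimeSpectrum.isClosed_zeroLocus _⟩ with hg
  obtain ⟨C, hC, hCmin⟩ := (wellFounded_lt (α := TopologicalSpace.Closeds (PrimeSpectrum R))).has_min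
    (g '' S) (hne.image g)
  obtain ⟨B, hB, rfl⟩ := hC
  refine ⟨B, hB, fun B' hB' hle P hPp hBP => ?_⟩
  have h1 : g B' ≤ g B := fun x hx =>
    PrimeSpectrum.zeroLocus_anti_mono (by exact_mod_cast hle) hx
  have h2 : ¬ g B' < g B := hCmin (g B') ⟨B', hB', rfl⟩
  have h3 : g B' = g B := h1.lt_or_eq.resolve_left h2
  have : (⟨P, hPp⟩ : PrimeSpectrum R) ∈ PrimeSpectrum.zeroLocus (B' : Set R) := by
    have hmem : (⟨P, hPp⟩ : PrimeSpectrum R) ∈ PrimeSpectrum.zeroLocus (B : Set R) :=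
      (PrimeSpectrum.mem_zeroLocus _ _).2 hBP
    have hset : PrimeSpectrum.zeroLocus (B' : Set R) = PrimeSpectrum.zeroLocus (B : Set R) := by
      have := congrArg TopologicalSpace.Closeds.carrier h3
      simpa [hg] using this
    rw [hset]
    exact hmem
  exact (PrimeSpectrum.mem_zeroLocus _ _).1 this

end IdealTheory



section Direction

variable {f : Submodule R K → Submodule R K}

private lemma idealToK_mono {A B : Ideal R} (h : A ≤ B) : idealToK K A ≤ idealToK K B :=
  Submodule.map_mono h

private lemma one_notMem_of_prime {P : Ideal R} (hPp : P.IsPrime) :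
    (1 : K) ∉ idealToK K P := by
  intro h
  obtain ⟨p, hp, hp1⟩ := mem_idealToK.1 h
  exact hPp.ne_top (Ideal.eq_top_of_isUnit_mem P
    ((phi_inj (K := K) (by rw [hp1, map_one]) : p = 1) ▸ hp) isUnit_one)

private lemma easy_q (hf : IsSemistarOperation K f) (hst : IsStableOperation K f)
    {P : Ideal R} (hPp : P.IsPrime) (heq : f (idealToK K P) ⊓ 1 = idealToK K P)
    (I : Submodule R K) : f I ≤ I * locSub K P hPp := by
  intro y hy
  by_cases hy0 : y = 0
  · rw [hy0]; exact Submodule.zero_mem _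
  have h1 : (1 : K) ∈ f (idealToK K (ctr (y⁻¹ • I))) := f_transfer hf hst hy0 hy
  by_cases hA : ctr (y⁻¹ • I) ≤ P
  · exfalso
    have h2 : f (idealToK K (ctr (y⁻¹ • I))) ≤ f (idealToK K P) :=
      hf.2.2.1 _ _ (idealToK_mono hA)
    have h3 : (1 : K) ∈ f (idealToK K P) ⊓ 1 := ⟨h2 h1, one_mem_one⟩
    rw [heq] at h3
    exact one_notMem_of_prime hPp h3
  · obtain ⟨s, hsA, hsP⟩ := SetLike.not_le_iff_exists.1 hA
    exact mem_mul_locSub.2 ⟨s, hsP, (mem_ctr_inv_smul hy0).1 hsA⟩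

private lemma smul_mul_smul_sub (c d : K) (V W : Submodule R K) :
    (c • V) * (d • W) = (c * d) • (V * W) := by
  rw [smul_submodule_mul, mul_comm V (d • W), smul_submodule_mul, smul_smul, mul_comm W V]

private lemma pow_le_smul_pow {c : K} {M V : Submodule R K}
    (hV : V * V ≤ V) (hone : (1 : Submodule R K) ≤ V) (h : M ≤ c • V) (n : ℕ) :
    M ^ n ≤ (c ^ n) • V := by
  induction n with
  | zero => rw [pow_zero, pow_zero, one_smul]; exact hone
  | succ k ih =>
    rw [pow_succ, pow_succ]
    calc M ^ k * M ≤ (c ^ k • V) * (c • V) := mul_le_mul' ih h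
      _ = (c ^ k * c) • (V * V) := smul_mul_smul_sub _ _ _ _
      _ ≤ (c ^ k * c) • V := smul_mono_right' _ hV

private lemma primary_contraction {P L : Ideal R} (hPp : P.IsPrime)
    (hLprim : L.IsPrimary) (hLrad : L.radical = P) {r : R}
    (h : algebraMap R K r ∈ idealToK K L * locSub K P hPp) : r ∈ L := by
  obtain ⟨s, hs, hsr⟩ := mem_mul_locSub.1 h
  have : r * s ∈ L := by
    have : algebraMap R K (r * s) ∈ idealToK K L := by rw [map_mul, mul_comm]; exact hsr
    obtain ⟨l, hl, hle⟩ := mem_idealToK.1 this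
    rwa [← phi_inj (K := K) hle]
  rcases (Ideal.isPrimary_iff.1 hLprim).2 this with h' | h'
  · exact h'
  · exact absurd (hLrad ▸ h') hs

private lemma easy_ps (hR : IsPruferDomain (R := R) K) (hf : IsSemistarOperation K f)
    (hst : IsStableOperation K f) {P : Ideal R} (hPp : P.IsPrime)
    {L : Ideal R} (hLprim : L.IsPrimary) (hLrad : L.radical = P)
    (hLcl : f (idealToK K L) ⊓ 1 = idealToK K L)
    (I : Submodule R K) : f I ≤ vOp K P hPp I := by
  intro y hy
  rw [vOp, Submodule.mem_div_iff_forall_mul_mem]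
  intro z hz
  rw [Submodule.mem_div_iff_forall_mul_mem] at hz
  by_cases hyz : y * z ∈ locSub K P hPp
  · exact hyz
  exfalso
  have hy0 : y ≠ 0 := by rintro rfl; rw [zero_mul] at hyz; exact hyz (Submodule.zero_mem _)
  have hz0 : z ≠ 0 := by rintro rfl; rw [mul_zero] at hyz; exact hyz (Submodule.zero_mem _)
  have hyz0 : y * z ≠ 0 := mul_ne_zero hy0 hz0
  rcases prufer_dichotomy hR P hPp (y * z) with hv | hv
  · exact hyz hv
  obtain ⟨q, s, hs, hqs⟩ := mem_locSub.1 hv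
  -- hqs : φ s * (y*z)⁻¹ = φ q
  have hq : q ∈ P := by
    by_contra hqP
    apply hyz
    refine mem_locSub.2 ⟨s, q, hqP, ?_⟩
    field_simp [← hqs]
    rw [← hqs, mul_assoc _ y z, mul_assoc, inv_mul_cancel₀ hyz0, mul_one]
  have hq0 : q ≠ 0 := by
    intro h0
    rw [h0, map_zero] at hqs
    exact (mul_ne_zero (algebraMap_ne_zero hs) (inv_ne_zero hyz0)) hqs
  obtain ⟨n, hqn⟩ : ∃ n : ℕ, q ^ n ∈ L := by
    rw [← hLrad] at hq
    exact Ideal.mem_radical_iff.1 hq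
  set A := ctr (y⁻¹ • I) with hA
  have hA1 : (1 : K) ∈ f (idealToK K A) := f_transfer hf hst hy0 hy
  have hAV : idealToK K A ≤ (algebraMap R K q) • locSub K P hPp := by
    rintro w hw
    obtain ⟨a, ha, rfl⟩ := mem_idealToK.1 hw
    have hIa : algebraMap R K a * y ∈ I := (mem_ctr_inv_smul hy0).1 ha
    have h2 : z * (algebraMap R K a * y) ∈ locSub K P hPp := hz _ (le_mulV I hIa)
    refine mem_smul'.2 ⟨(algebraMap R K s)⁻¹ * (z * (algebraMap R K a * y)),
      locSub_mul_le (Submodule.mul_mem_mul (inv_mem_locSub hs) h2), ?_⟩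
    rw [← hqs]
    field_simp [algebraMap_ne_zero hs]
  have hApow : (idealToK K A) ^ n ≤ idealToK K L * locSub K P hPp := by
    have h1 : (idealToK K A) ^ n ≤ (algebraMap R K q ^ n) • locSub K P hPp :=
      pow_le_smul_pow locSub_mul_le one_le_locSub hAV n
    refine h1.trans ?_
    rintro w hw
    obtain ⟨v, hvV, rfl⟩ := mem_smul'.1 hw
    rw [← map_pow]
    exact Submodule.mul_mem_mul (mem_idealToK.2 ⟨q ^ n, hqn, rfl⟩) hvV
  have hAn : idealToK K (A ^ n) ≤ idealToK K L := by
    rw [idealToK_pow]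
    rintro w hw
    obtain ⟨a', ha', rfl⟩ : ∃ a' ∈ A ^ n, algebraMap R K a' = w := by
      rw [← idealToK_pow] at hw
      exact mem_idealToK.1 hw
    exact mem_idealToK.2 ⟨a', primary_contraction hPp hLprim hLrad (hApow (by
      rw [← idealToK_pow]; exact mem_idealToK.2 ⟨a', ha', rfl⟩)), rfl⟩
  have hfinal : (1 : K) ∈ idealToK K L := by
    have h1 : (1 : K) ∈ f (idealToK K (A ^ n)) := by
      rw [idealToK_pow]
      exact f_one_mem_pow hf hA1 n
    have h2 := hf.2.2.1 _ _ hAn h1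
    rw [← hLcl]
    exact ⟨h2, one_mem_one⟩
  obtain ⟨l, hl, hl1⟩ := mem_idealToK.1 hfinal
  exact (Ideal.isPrimary_iff.1 hLprim).1
    (Ideal.eq_top_of_isUnit_mem L ((phi_inj (K := K) (by rw [hl1, map_one]) : l = 1) ▸ hl) isUnit_one)

end Direction

section Hard

variable {f : Submodule R K → Submodule R K}

private lemma algebraMap_ne_zero' {r : R} (hr : r ≠ 0) : algebraMap R K r ≠ 0 :=
  fun h => hr (phi_inj (K := K) (by rw [h, map_zero]))

private lemma hard (hR : IsPruferDomain (R := R) K)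
    (hNoeth : TopologicalSpace.NoetherianSpace (PrimeSpectrum R))
    (hf : IsSemistarOperation K f) (hst : IsStableOperation K f)
    (I : Submodule R K) (x : K) (hx : x ≠ 0)
    (hq : ∀ P : Ideal R, ∀ h : P ∈ QSpec K f, x ∈ I * locSub K P h.1)
    (hps : ∀ P : Ideal R, ∀ h : P ∈ PsSpec K f, x ∈ vOp K P h.1 I) :
    x ∈ f I := by
  by_contra hxf
  set J₀ : Ideal R := ctr (x⁻¹ • I) with hJ₀
  set S : Set (Ideal R) := {B | J₀ ≤ B ∧ (1 : K) ∉ f (idealToK K B) ∧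
    ∀ r : R, algebraMap R K r ∈ f (idealToK K B) → r ∈ B} with hS
  have hleB₀ : ∀ m ∈ idealToK K (ctr (x⁻¹ • f I)), x * m ∈ f I := by
    rintro m hm
    obtain ⟨r, hr, rfl⟩ := mem_idealToK.1 hm
    have := (mem_ctr_inv_smul hx).1 hr
    rwa [mul_comm] at this
  have hB₀ : ctr (x⁻¹ • f I) ∈ S := by
    refine ⟨?_, ?_, ?_⟩
    · intro r hr
      exact (mem_ctr_inv_smul hx).2 (hf.1 I ((mem_ctr_inv_smul hx).1 hr))
    · intro h1
      apply hxf
      have h2 := f_mul_mem hf h1 hleB₀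
      rwa [mul_one, hf.2.1] at h2
    · intro r hr
      have h2 := f_mul_mem hf hr hleB₀
      rw [hf.2.1] at h2
      exact (mem_ctr_inv_smul hx).2 (by rwa [mul_comm] at h2)
  obtain ⟨B, hBS, hBmin⟩ := noeth_min hNoeth S ⟨_, hB₀⟩
  obtain ⟨hJ₀B, hB1, hBcl⟩ := hBS
  have hBproper : B ≠ ⊤ := by
    rintro rfl
    exact hB1 (hf.1 _ (idealToK_top (R := R) (K := K) ▸ one_mem_one))
  obtain ⟨Mx, hMx, hBMx⟩ := Ideal.exists_le_maximal B hBproper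
  haveI := hMx.isPrime
  obtain ⟨P, hPmin, hPMx⟩ := Ideal.exists_minimalPrimes_le hBMx
  have hPp : P.IsPrime := hPmin.1.1
  have hBP : B ≤ P := hPmin.1.2
  by_cases hPF : (1 : K) ∈ f (idealToK K P)
  · by_cases hBV : (1 : K) ∈ f (idealToK K B * locSub K P hPp)
    · -- quasi-star closure of B is not trivial at P: enlarge B, contradiction with minimality
      have hA1 : (1 : K) ∈ f (idealToK K (ctr (idealToK K B * locSub K P hPp))) := by
        rw [idealToK_ctr, hst]
        exact ⟨hBV, hf.1 _ one_mem_one⟩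
      have hex : ∃ a ∈ ctr (idealToK K B * locSub K P hPp),
          (1 : K) ∉ f (idealToK K (Submodule.colon B (Ideal.span {a}))) := by
        by_contra hcon
        push_neg at hcon
        apply hB1
        have hle : idealToK K (ctr (idealToK K B * locSub K P hPp)) ≤ f (idealToK K B) := by
          rintro w hw
          obtain ⟨a, ha, rfl⟩ := mem_idealToK.1 hw
          have h2 := f_mul_mem hf (hcon a ha) (z := algebraMap R K a) (M := idealToK K B)
            (by
              rintro m hm
              obtain ⟨c, hc, rfl⟩ := mem_idealToK.1 hm
              rw [← map_mul]
              exact mem_idealToK.2 ⟨a * c,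
                by rw [mul_comm]; exact Ideal.mem_colon_span_singleton.1 hc, rfl⟩)
          rwa [mul_one] at h2
        have h3 := hf.2.2.1 _ _ hle hA1
        rwa [hf.2.1] at h3
      obtain ⟨a, haA, haF⟩ := hex
      have hBB₁ : B ≤ Submodule.colon B (Ideal.span {a}) := fun b hb =>
        Ideal.mem_colon_span_singleton.2 (B.mul_mem_right a hb)
      have hB₁S : Submodule.colon B (Ideal.span {a}) ∈ S := by
        refine ⟨hJ₀B.trans hBB₁, haF, ?_⟩
        intro r hr
        have h2 := f_mul_mem hf hr (z := algebraMap R K a) (M := idealToK K B)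
          (by
            rintro m hm
            obtain ⟨c, hc, rfl⟩ := mem_idealToK.1 hm
            rw [← map_mul]
            exact mem_idealToK.2 ⟨a * c,
              by rw [mul_comm]; exact Ideal.mem_colon_span_singleton.1 hc, rfl⟩)
        rw [← map_mul] at h2
        have h3 : a * r ∈ B := hBcl _ h2
        exact Ideal.mem_colon_span_singleton.2 (by rwa [mul_comm] at h3)
      obtain ⟨s, hsP, hsa⟩ := mem_mul_locSub.1 ((mem_ctr (R := R) (K := K)).1 haA)
      have hsB₁ : s ∈ Submodule.colon B (Ideal.span {a}) := by
        rw [← map_mul] at hsa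
        obtain ⟨b, hb, hbe⟩ := mem_idealToK.1 hsa
        have hsab : s * a ∈ B := by rwa [phi_inj (K := K) hbe] at hb
        exact Ideal.mem_colon_span_singleton.2 hsab
      exact hsP (hBmin _ hB₁S hBB₁ P hPp hBP hsB₁)
    · -- P is in the pseudo-spectrum, and the v-operation separates x
      set V := locSub K P hPp with hVdef
      set N := f (idealToK K B * V) with hNdef
      have hNV : N * V ≤ N := f_locStable hf (mulV_stable _)
      set L : Ideal R := ctr N with hLdef
      have hLP : L ≤ P := by
        intro r hr
        by_contra hrP
        apply hBV
        have h1 : algebraMap R K r * (algebraMap R K r)⁻¹ ∈ N * V :=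
          Submodule.mul_mem_mul ((mem_ctr (R := R) (K := K)).1 hr) (inv_mem_locSub hrP)
        rw [mul_inv_cancel₀ (algebraMap_ne_zero hrP)] at h1
        exact hNV h1
      have hLrad : L.radical = P := by
        apply le_antisymm
        · have := Ideal.radical_mono hLP
          rwa [hPp.radical] at this
        · intro p hp
          obtain ⟨n, s, hs, hsp⟩ := exists_pow_mem_of_minimal hPmin hp
          rw [Ideal.mem_radical_iff]
          refine ⟨n, ?_⟩
          rw [hLdef, mem_ctr]
          have h1 : algebraMap R K (s * p ^ n) * (algebraMap R K s)⁻¹ ∈ idealToK K B * V :=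
            Submodule.mul_mem_mul (mem_idealToK.2 ⟨_, hsp, rfl⟩) (inv_mem_locSub hs)
          have h2 : algebraMap R K (p ^ n) = algebraMap R K (s * p ^ n) * (algebraMap R K s)⁻¹ := by
            rw [map_mul]
            field_simp [algebraMap_ne_zero hs]
          rw [h2]
          exact hf.1 _ h1
      have hLprim : L.IsPrimary := by
        rw [Ideal.isPrimary_iff]
        constructor
        · intro htop
          apply hBV
          have h1 : (1 : R) ∈ L := htop ▸ Submodule.mem_top
          have h2 := (mem_ctr (R := R) (K := K)).1 h1
          rwa [map_one] at h2
        · intro r t hrt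
          by_cases htP : t ∈ P
          · right; rw [hLrad]; exact htP
          · left
            rw [hLdef, mem_ctr]
            have h1 : algebraMap R K (r * t) * (algebraMap R K t)⁻¹ ∈ N * V :=
              Submodule.mul_mem_mul ((mem_ctr (R := R) (K := K)).1 hrt) (inv_mem_locSub htP)
            have h2 : algebraMap R K r = algebraMap R K (r * t) * (algebraMap R K t)⁻¹ := by
              rw [map_mul]
              field_simp [algebraMap_ne_zero htP]
            rw [h2]
            exact hNV h1
      have hLcl : f (idealToK K L) ⊓ 1 = idealToK K L := by
        rw [hLdef, idealToK_ctr, hNdef, hst, hf.2.1]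
        apply le_antisymm
        · exact le_inf (inf_le_left.trans inf_le_left) inf_le_right
        · exact le_inf (le_inf inf_le_left (inf_le_right.trans (hf.1 1))) inf_le_right
      have hP1 : f (idealToK K P) ⊓ 1 = 1 := by
        apply le_antisymm inf_le_right
        intro w hw
        obtain ⟨r, rfl⟩ := mem_one'.1 hw
        refine ⟨?_, hw⟩
        have h1 := Submodule.smul_mem (f (idealToK K P)) r hPF
        rwa [Algebra.smul_def, mul_one] at h1
      have hPmem : P ∈ PsSpec K f := ⟨hPp, hP1, L, hLprim, hLrad, hLcl⟩
      have hnoJ : ∀ s : R, s ∉ P → algebraMap R K s * x ∈ I → False := by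
        intro s hsP hsx
        exact hsP (hBP (hJ₀B ((mem_ctr_inv_smul hx).2 hsx)))
      have huex : ∃ u : R, u ∈ P ∧ u ≠ 0 ∧ (N ⊓ V) ≤ (algebraMap R K u) • V := by
        by_contra hcon
        push_neg at hcon
        apply hBV
        have hPN : idealToK K P ≤ N := by
          rintro w hw
          obtain ⟨u, hu, rfl⟩ := mem_idealToK.1 hw
          by_cases hu0 : u = 0
          · rw [hu0, map_zero]; exact N.zero_mem
          obtain ⟨w', hw', hw'u⟩ := SetLike.not_le_iff_exists.1 (hcon u hu hu0)
          have hw'0 : w' ≠ 0 := fun h0 => hw'u (by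
            rw [h0]
            exact mem_smul'.2 ⟨0, Submodule.zero_mem _, by rw [mul_zero]⟩)
          have huK : algebraMap R K u ≠ 0 := algebraMap_ne_zero' hu0
          rcases prufer_dichotomy hR P hPp (algebraMap R K u * w'⁻¹) with hd | hd
          · have heq2 : algebraMap R K u = w' * (algebraMap R K u * w'⁻¹) := by
              field_simp
            rw [heq2]
            have hNV' : (N ⊓ V) * V ≤ N ⊓ V :=
              le_inf ((mul_le_mul_left inf_le_left _).trans hNV)
                ((mul_le_mul_left inf_le_right _).trans locSub_mul_le)
            exact (hNV' (Submodule.mul_mem_mul hw' hd)).1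
          · exfalso
            apply hw'u
            rw [mul_inv, inv_inv] at hd
            refine mem_smul'.2 ⟨(algebraMap R K u)⁻¹ * w', hd, ?_⟩
            field_simp
        have h2 : f (idealToK K P) ≤ N := by
          rw [hNdef, ← hf.2.1 (idealToK K B * V)]
          exact hf.2.2.1 _ _ hPN
        exact h2 hPF
      obtain ⟨u, huP, hu0, huV⟩ := huex
      have huK : algebraMap R K u ≠ 0 := algebraMap_ne_zero' hu0
      have hxIV : x⁻¹ • (I * V) ≤ (algebraMap R K u) • V := by
        have hstab : (x⁻¹ • (I * V)) * V ≤ x⁻¹ • (I * V) := by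
          rw [smul_submodule_mul]
          exact smul_mono_right' _ (mulV_stable I)
        rcases locStable_total hR P hPp hstab locSub_mul_le with hle | hle
        · have hMeq : x⁻¹ • (I * V) = idealToK K J₀ * V := by
            rw [hJ₀, idealToK_ctr, inf_mul_locSub, one_mul, smul_submodule_mul]
            exact (inf_eq_left.2 hle).symm
          rw [hMeq]
          refine le_trans (le_inf ?_ ?_) huV
          · exact (mul_le_mul' (idealToK_mono hJ₀B) le_rfl).trans (hf.1 _)
          · exact (mul_le_mul' (idealToK_le_one.trans one_le_locSub) le_rfl).trans
              locSub_mul_le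
        · exfalso
          have h1 : (1 : K) ∈ x⁻¹ • (I * V) := hle one_mem_locSub
          obtain ⟨w, hwIV, hw1⟩ := mem_smul'.1 h1
          rw [inv_mul_eq_one₀ hx] at hw1
          obtain ⟨s, hsP, hsx⟩ := mem_mul_locSub.1 (hw1 ▸ hwIV)
          exact hnoJ s hsP hsx
      have hxvop := hps P hPmem
      rw [vOp, Submodule.mem_div_iff_forall_mul_mem] at hxvop
      have hzdiv : (x * algebraMap R K u)⁻¹ ∈ locSub K P hPp / (I * locSub K P hPp) := by
        rw [Submodule.mem_div_iff_forall_mul_mem]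
        intro w hw
        have h1 : x⁻¹ * w ∈ (algebraMap R K u) • V := hxIV (mem_smul'.2 ⟨w, hw, rfl⟩)
        obtain ⟨v, hv, hveq⟩ := mem_smul'.1 h1
        have h2 : (x * algebraMap R K u)⁻¹ * w = v := by
          apply mul_left_cancel₀ huK
          rw [hveq, mul_inv]
          field_simp
        rw [h2]
        exact hv
      have h3 := hxvop _ hzdiv
      have hxx : x * (x * algebraMap R K u)⁻¹ = (algebraMap R K u)⁻¹ := by
        rw [mul_inv, ← mul_assoc, mul_inv_cancel₀ hx, one_mul]
      rw [hxx] at h3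
      obtain ⟨c, s, hs, hcs⟩ := mem_locSub.1 h3
      have hscu : s = c * u := by
        apply phi_inj (K := K)
        rw [map_mul, ← hcs]
        field_simp
      exact hs (hscu ▸ P.mul_mem_left c huP)
  · -- P belongs to the quasi-spectrum
    have heq : f (idealToK K P) ⊓ 1 = idealToK K P := by
      apply le_antisymm
      · rintro w ⟨hw1, hw2⟩
        obtain ⟨r, rfl⟩ := mem_one'.1 hw2
        by_cases hr : r ∈ P
        · exact mem_idealToK.2 ⟨r, hr, rfl⟩
        exfalso
        apply hPF
        have hr0 : algebraMap R K r ≠ 0 := algebraMap_ne_zero hr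
        have h1 := f_transfer hf hst hr0 hw1
        have hctr : ctr ((algebraMap R K r)⁻¹ • idealToK K P) = P := by
          ext t
          rw [mem_ctr_inv_smul hr0]
          constructor
          · intro h
            obtain ⟨p, hp, hpe⟩ := mem_idealToK.1 h
            have hpt : p = t * r := phi_inj (K := K) (by rw [map_mul]; exact hpe)
            exact (hPp.mem_or_mem (hpt ▸ hp)).resolve_right hr
          · intro ht
            exact mem_idealToK.2 ⟨t * r, P.mul_mem_right r ht, by rw [map_mul]⟩
        rwa [hctr] at h1
      · exact le_inf (hf.1 _) idealToK_le_one
    obtain ⟨s, hsP, hsx⟩ := mem_mul_locSub.1 (hq P ⟨hPp, heq⟩)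
    exact hsP (hBP (hJ₀B ((mem_ctr_inv_smul hx).2 hsx)))

end Hard

end Aux


/-- Let `R` be a Prüfer domain with Noetherian prime spectrum. Then every stable semistar
operation on `R` equals its normalized stable version. -/
theorem star_eq_normStable_of_noetherianSpace {R K : Type*} [CommRing R] [IsDomain R] [Field K] [Algebra R K]
    [IsFractionRing R K]
    (hR : IsPruferDomain (R := R) K)
    (hNoeth : TopologicalSpace.NoetherianSpace (PrimeSpectrum R))
    (f : Submodule R K → Submodule R K) (hf : IsSemistarOperation K f)
    (hstable : IsStableOperation K f) :
    ∀ I : Submodule R K, f I = normStable K f I := by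
  intro I
  apply le_antisymm
  · refine le_inf (le_iInf ?_) (le_iInf ?_)
    · rintro ⟨P, hP⟩
      exact easy_q hf hstable hP.1 hP.2 I
    · rintro ⟨P, hP⟩
      obtain ⟨hPp, hP1, L, hLprim, hLrad, hLcl⟩ := hP
      exact easy_ps hR hf hstable hPp hLprim hLrad hLcl I
  · intro x hx
    by_cases hx0 : x = 0
    · rw [hx0]; exact (f I).zero_mem
    obtain ⟨hx1, hx2⟩ := Submodule.mem_inf.1 hx
    rw [Submodule.mem_iInf] at hx1 hx2
    exact hard hR hNoeth hf hstable I x hx0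
      (fun P h => hx1 ⟨P, h⟩) (fun P h => hx2 ⟨P, h⟩)
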